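/- arXiv:2003.04436 — 2 statements merged into one kernel-verified Lean document; each statement's English description precedes it below -/
import Mathlib

section
/- Let (S,𝒮) be a measurable space and L > 0. Suppose F : S×ℝⁿ → ℝⁿ is 𝒮⊗𝓑(ℝⁿ)-measurable and for each a ∈ S the map F(a,·) belongs to H_L, i.e. F(a,·) is a homeomorphism of ℝⁿ satisfying L^{−1}|x−y| ≤ |F(a,x)−F(a,y)| ≤ L|x−y| for all x,y ∈ ℝⁿ. Then the map F^{−1} : S×ℝⁿ → ℝⁿ, (a,x) ↦ (F(a,·))^{−1}(x), is 𝒮⊗𝓑(ℝⁿ)/𝓑(ℝⁿ)-measurable. -/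
/-!
Pick a dense sequence `d` in the domain and positive `εₖ → 0`. Let `iₖ(a, y)` be the first index
with `dist (F a (d i)) y < εₖ`; it exists because `F a` is continuous and onto, and it is a
measurable function of `(a, y)` because each condition cuts out a measurable set. A uniform
antilipschitz bound `K` gives `dist (d (iₖ(a, y))) (G (a, y)) ≤ K εₖ`, so the inverse `G` is a
pointwise limit of the measurable maps `d ∘ iₖ`.
-/

open MeasureTheory

/-- `ℝⁿ` as a Euclidean space. -/
abbrev Rn (n : ℕ) : Type := EuclideanSpace ℝ (Fin n)

open Filter TopologicalSpace Metric
open scoped NNReal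

section

variable {S X Y : Type*} [MeasurableSpace S] [PseudoMetricSpace Y]

lemma DenseRange.exists_dist_comp_lt [TopologicalSpace X] {d : ℕ → X} (hd : DenseRange d)
    {f : X → Y} (hf : Continuous f) (x : X) {ε : ℝ} (hε : 0 < ε) :
    ∃ i, dist (f (d i)) (f x) < ε :=
  hd.exists_mem_open (isOpen_ball.preimage hf) ⟨x, mem_ball_self hε⟩

variable [MeasurableSpace Y] [OpensMeasurableSpace Y] [SecondCountableTopology Y]

lemma measurable_find_dist_lt [MeasurableSpace X] {F : S → X → Y}
    (hF : Measurable fun q : S × X => F q.1 q.2) (d : ℕ → X) (ε : ℝ)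
    (h : ∀ q : S × Y, ∃ i, dist (F q.1 (d i)) q.2 < ε) :
    Measurable fun q => Nat.find (h q) := by
  classical
  refine measurable_find h fun i => measurableSet_lt ?_ measurable_const
  exact (hF.comp (measurable_fst.prodMk measurable_const)).dist measurable_snd

theorem measurable_of_rightInverse_of_antilipschitzWith [PseudoMetricSpace X] [SeparableSpace X]
    [Nonempty X] [MeasurableSpace X] [BorelSpace X] {F : S → X → Y} {G : S × Y → X} {K : ℝ≥0}
    (hF : Measurable fun q : S × X => F q.1 q.2) (hcont : ∀ a, Continuous (F a))
    (hanti : ∀ a, AntilipschitzWith K (F a)) (hG : ∀ q, F q.1 (G q) = q.2) :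
    Measurable G := by
  obtain ⟨d, hd⟩ := exists_dense_seq X
  obtain ⟨ε, -, hε_pos, hε_lim⟩ := exists_seq_strictAnti_tendsto (0 : ℝ)
  have hex : ∀ k (q : S × Y), ∃ i, dist (F q.1 (d i)) q.2 < ε k := fun k q => by
    simpa only [hG q] using hd.exists_dist_comp_lt (hcont q.1) (G q) (hε_pos k)
  refine measurable_of_tendsto_metrizable (f := fun k q => d (Nat.find (hex k q)))
    (fun k => measurable_from_top.comp (measurable_find_dist_lt hF d _ (hex k)))
    (tendsto_pi_nhds.2 fun q => ?_)
  have hbound : ∀ k, dist (d (Nat.find (hex k q))) (G q) ≤ K * ε k := fun k =>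
    calc dist (d (Nat.find (hex k q))) (G q)
        ≤ K * dist (F q.1 (d (Nat.find (hex k q)))) (F q.1 (G q)) := (hanti q.1).le_mul_dist _ _
      _ ≤ K * ε k := by
        rw [hG q]
        exact mul_le_mul_of_nonneg_left (Nat.find_spec (hex k q)).le K.2
  rw [tendsto_iff_dist_tendsto_zero]
  exact squeeze_zero (fun _ => dist_nonneg) hbound (by simpa using hε_lim.const_mul (K : ℝ))

end

/-- If `F : S × ℝⁿ → ℝⁿ` is `𝒮 ⊗ 𝓑(ℝⁿ)`-measurable and each `F(a,·)` is a homeomorphism of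
`ℝⁿ` satisfying `L⁻¹|x−y| ≤ |F(a,x)−F(a,y)| ≤ L|x−y|`, then
`(a,x) ↦ (F(a,·))⁻¹(x)` is `𝒮 ⊗ 𝓑(ℝⁿ)`-measurable. -/
theorem measurable_inverse_of_biLipschitz_family
    {S : Type*} [MeasurableSpace S] (n : ℕ) (L : ℝ) (hL : 0 < L)
    (F : S → Rn n → Rn n)
    (hF : Measurable (fun q : S × Rn n => F q.1 q.2))
    (hbij : ∀ a : S, Function.Bijective (F a))
    (hlow : ∀ (a : S) (x y : Rn n), L⁻¹ * dist x y ≤ dist (F a x) (F a y))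
    (hup : ∀ (a : S) (x y : Rn n), dist (F a x) (F a y) ≤ L * dist x y) :
    Measurable (fun q : S × Rn n => Function.invFun (F q.1) q.2) := by
  let K : ℝ≥0 := ⟨L, hL.le⟩
  have hcont (a : S) : Continuous (F a) := (LipschitzWith.of_dist_le_mul (K := K) (hup a)).continuous
  have hanti (a : S) : AntilipschitzWith K (F a) :=
    .of_le_mul_dist fun x y => (inv_mul_le_iff₀ hL).1 (hlow a x y)
  exact measurable_of_rightInverse_of_antilipschitzWith hF hcont hanti
    fun q => Function.rightInverse_invFun (hbij q.1).2 q.2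
end

section
/- Let L > 0 and equip H_L with d(f,g) := sup_{x∈ℝⁿ} |f(x)−g(x)|/(1+|x|). Then: (a) d is a finite metric on H_L; (b) the inversion map Inv : H_L → H_L, f ↦ f^{−1}, is well defined (i.e. f ∈ H_L implies f^{−1} ∈ H_L) and continuous with respect to d; in fact, for all f, g ∈ H_L, d(f^{−1}, g^{−1}) ≤ L·(1 + L + L|g(0)|)·d(f,g). -/
/-- The set `H_L` of homeomorphisms `f : ℝⁿ → ℝⁿ` with
`L⁻¹|x−y| ≤ |f(x)−f(y)| ≤ L|x−y|` for all `x, y`. -/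
def HL (n : ℕ) (L : ℝ) : Set (Rn n → Rn n) :=
  {f | Function.Bijective f ∧
    ∀ x y : Rn n, L⁻¹ * dist x y ≤ dist (f x) (f y) ∧ dist (f x) (f y) ≤ L * dist x y}

/-- `d(f,g) := sup_x |f(x) − g(x)|/(1+|x|)`. -/
noncomputable def dHL {n : ℕ} (f g : Rn n → Rn n) : ℝ :=
  ⨆ x : Rn n, dist (f x) (g x) / (1 + ‖x‖)

open Function NNReal

theorem norm_le_of_antilipschitzWith {E F : Type*} [SeminormedAddCommGroup E]
    [SeminormedAddCommGroup F] {K : ℝ≥0} {g : E → F} (hg : AntilipschitzWith K g) (v : E) :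
    ‖v‖ ≤ K * (‖g v‖ + ‖g 0‖) := by
  calc ‖v‖ = dist v 0 := (dist_zero_right v).symm
    _ ≤ K * dist (g v) (g 0) := hg.le_mul_dist v 0
    _ ≤ K * (‖g v‖ + ‖g 0‖) := by gcongr; exact dist_le_norm_add_norm _ _

theorem dist_invFun_le_mul_dist {α β : Type*} [Nonempty α] [PseudoMetricSpace α]
    [PseudoMetricSpace β] {K : ℝ≥0} {f g : α → β} (hf : AntilipschitzWith K f)
    (hfs : Surjective f) (hgs : Surjective g) (x : β) :
    dist (invFun f x) (invFun g x) ≤ K * dist (f (invFun g x)) (g (invFun g x)) := by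
  have hfg : f (invFun f x) = g (invFun g x) := by
    rw [rightInverse_invFun hfs x, rightInverse_invFun hgs x]
  simpa only [hfg, dist_comm (g _)] using hf.le_mul_dist (invFun f x) (invFun g x)

section WeightedSupDistance

variable {n : ℕ} {f g h : Rn n → Rn n}

theorem dHL_nonneg (f g : Rn n → Rn n) : 0 ≤ dHL f g :=
  Real.iSup_nonneg fun _ => by positivity

theorem dHL_comm (f g : Rn n → Rn n) : dHL f g = dHL g f := by
  simp only [dHL, dist_comm]

theorem dHL_le_of_forall_dist_le {C : ℝ} (hC : ∀ x, dist (f x) (g x) ≤ C * (1 + ‖x‖)) :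
    dHL f g ≤ C :=
  ciSup_le fun x => (div_le_iff₀ (by positivity)).2 (hC x)

theorem bddAbove_range_dist_div_one_add_norm {K K' : ℝ≥0} (hf : LipschitzWith K f)
    (hg : LipschitzWith K' g) :
    BddAbove (Set.range fun x : Rn n => dist (f x) (g x) / (1 + ‖x‖)) := by
  refine ⟨K + K' + dist (f 0) (g 0), ?_⟩
  rintro _ ⟨x, rfl⟩
  have hfx : dist (f x) (f 0) ≤ K * ‖x‖ := by simpa using hf.dist_le_mul x 0
  have hgx : dist (g 0) (g x) ≤ K' * ‖x‖ := by simpa using hg.dist_le_mul 0 x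
  have hgrowth := dist_triangle4 (f x) (f 0) (g 0) (g x)
  rw [div_le_iff₀ (by positivity)]
  nlinarith [norm_nonneg x, dist_nonneg (x := f 0) (y := g 0), K.coe_nonneg, K'.coe_nonneg]

theorem dist_le_dHL_mul {K K' : ℝ≥0} (hf : LipschitzWith K f) (hg : LipschitzWith K' g)
    (x : Rn n) : dist (f x) (g x) ≤ dHL f g * (1 + ‖x‖) :=
  (div_le_iff₀ (by positivity)).1 (le_ciSup (bddAbove_range_dist_div_one_add_norm hf hg) x)

theorem dHL_eq_zero_iff {K K' : ℝ≥0} (hf : LipschitzWith K f) (hg : LipschitzWith K' g) :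
    dHL f g = 0 ↔ f = g := by
  refine ⟨fun h0 => funext fun x => dist_le_zero.1 ?_, fun hfg => by simp [hfg, dHL]⟩
  simpa [h0] using dist_le_dHL_mul hf hg x

theorem dHL_triangle {K K' K'' : ℝ≥0} (hf : LipschitzWith K f) (hh : LipschitzWith K' h)
    (hg : LipschitzWith K'' g) : dHL f g ≤ dHL f h + dHL h g :=
  dHL_le_of_forall_dist_le fun x =>
    calc dist (f x) (g x) ≤ dist (f x) (h x) + dist (h x) (g x) := dist_triangle _ _ _
      _ ≤ dHL f h * (1 + ‖x‖) + dHL h g * (1 + ‖x‖) :=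
        add_le_add (dist_le_dHL_mul hf hh x) (dist_le_dHL_mul hh hg x)
      _ = (dHL f h + dHL h g) * (1 + ‖x‖) := by ring

theorem dHL_invFun_le {K : ℝ≥0} (hf : LipschitzWith K f) (hfa : AntilipschitzWith K f)
    (hfs : Surjective f) (hg : LipschitzWith K g) (hga : AntilipschitzWith K g)
    (hgs : Surjective g) :
    dHL (invFun f) (invFun g) ≤ K * (1 + K + K * ‖g 0‖) * dHL f g := by
  refine dHL_le_of_forall_dist_le fun x => ?_
  set v := invFun g x
  have hnorm_v : ‖v‖ ≤ K * (‖x‖ + ‖g 0‖) := by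
    simpa only [v, rightInverse_invFun hgs x] using norm_le_of_antilipschitzWith hga v
  have hweight : 1 + ‖v‖ ≤ (1 + K + K * ‖g 0‖) * (1 + ‖x‖) := by
    nlinarith [norm_nonneg x, K.coe_nonneg,
      mul_nonneg (mul_nonneg K.coe_nonneg (norm_nonneg (g 0))) (norm_nonneg x)]
  calc dist (invFun f x) v ≤ K * dist (f v) (g v) := dist_invFun_le_mul_dist hfa hfs hgs x
    _ ≤ K * (dHL f g * (1 + ‖v‖)) := by gcongr; exact dist_le_dHL_mul hf hg v
    _ ≤ K * (dHL f g * ((1 + K + K * ‖g 0‖) * (1 + ‖x‖))) := by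
      gcongr; exact dHL_nonneg f g
    _ = K * (1 + K + K * ‖g 0‖) * dHL f g * (1 + ‖x‖) := by ring

end WeightedSupDistance

section BilipschitzHomeomorphisms

variable {n : ℕ} {K : ℝ≥0} {f : Rn n → Rn n}

theorem mem_HL_iff (hK : 0 < (K : ℝ)) :
    f ∈ HL n K ↔ Bijective f ∧ AntilipschitzWith K f ∧ LipschitzWith K f := by
  simp only [HL, Set.mem_ofPred_eq, antilipschitzWith_iff_le_mul_dist,
    lipschitzWith_iff_dist_le_mul, inv_mul_le_iff₀ hK, forall_and]

theorem invFun_mem_HL (hK : 0 < (K : ℝ)) (hf : f ∈ HL n K) : invFun f ∈ HL n K := by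
  obtain ⟨⟨hfi, hfs⟩, hfa, hfl⟩ := (mem_HL_iff hK).1 hf
  have hright : RightInverse (invFun f) f := rightInverse_invFun hfs
  exact (mem_HL_iff hK).2 ⟨⟨hright.injective, (leftInverse_invFun hfi).surjective⟩,
    hfl.to_rightInverse hright, hfa.to_rightInverse hright⟩

end BilipschitzHomeomorphisms

/-- `d(f,g) = sup_x |f(x)−g(x)|/(1+|x|)` is a finite metric on `H_L`, the inversion map
`Inv : H_L → H_L`, `f ↦ f⁻¹` is well defined, and it is continuous for `d`; quantitatively,
`d(f⁻¹, g⁻¹) ≤ L(1 + L + L|g(0)|) d(f,g)` for all `f, g ∈ H_L`. -/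
theorem HL_metric_and_inversion_continuous (n : ℕ) (L : ℝ) (hL : 0 < L) :
    -- (a) `d` is a finite metric on `H_L`
    (∀ f ∈ HL n L, ∀ g ∈ HL n L,
      BddAbove (Set.range fun x : Rn n => dist (f x) (g x) / (1 + ‖x‖)) ∧
      0 ≤ dHL f g ∧ dHL f g = dHL g f ∧ (dHL f g = 0 ↔ f = g) ∧
      ∀ h ∈ HL n L, dHL f g ≤ dHL f h + dHL h g) ∧
    -- (b) inversion is well defined on `H_L` ...
    (∀ f ∈ HL n L, Function.invFun f ∈ HL n L) ∧
    -- ... and continuous, with the quantitative bound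
    (∀ f ∈ HL n L, ∀ g ∈ HL n L,
      dHL (Function.invFun f) (Function.invFun g) ≤ L * (1 + L + L * ‖g 0‖) * dHL f g) := by
  lift L to ℝ≥0 using hL.le
  refine ⟨fun f hf g hg => ?_, fun f hf => invFun_mem_HL hL hf, fun f hf g hg => ?_⟩
  · obtain ⟨-, -, hfl⟩ := (mem_HL_iff hL).1 hf
    obtain ⟨-, -, hgl⟩ := (mem_HL_iff hL).1 hg
    refine ⟨bddAbove_range_dist_div_one_add_norm hfl hgl, dHL_nonneg f g, dHL_comm f g,
      dHL_eq_zero_iff hfl hgl, fun h hh => ?_⟩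
    exact dHL_triangle hfl ((mem_HL_iff hL).1 hh).2.2 hgl
  · obtain ⟨⟨-, hfs⟩, hfa, hfl⟩ := (mem_HL_iff hL).1 hf
    obtain ⟨⟨-, hgs⟩, hga, hgl⟩ := (mem_HL_iff hL).1 hg
    exact dHL_invFun_le hfl hfa hfs hgl hga hgs
end
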